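/- arXiv:2210.08932 — 4 statements merged into one kernel-verified Lean document; each statement's English description precedes it below -/
import Mathlib

section
/- If μ₁ and μ₂ are fuzzy Hom-Lie subalgebras of Hom-Lie algebras L₁ and L₂ respectively, then the fuzzy set μ₁ ⊕ μ₂ on L₁ ⊕ L₂ defined by (μ₁ ⊕ μ₂)(x₁,x₂) = min(μ₁(x₁),μ₂(x₂)) is a fuzzy Hom-Lie subalgebra of the direct sum Hom-Lie algebra L₁ ⊕ L₂. -/
open scoped Classical

structure HomLieData (F : Type*) (L : Type*) [Field F] [AddCommGroup L] [Module F L] where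
  bracket : L →ₗ[F] L →ₗ[F] L
  alpha : L →ₗ[F] L
  skew : ∀ x y : L, bracket x y = - bracket y x
  jacobi : ∀ x y z : L,
    bracket (alpha x) (bracket y z) + bracket (alpha y) (bracket z x) +
      bracket (alpha z) (bracket x y) = 0

def IsFuzzyHomLieSubalgebra {F L : Type*} [Field F] [AddCommGroup L] [Module F L]
    (H : HomLieData F L) (μ : L → ℝ) : Prop :=
  (∀ x y : L, μ (x + y) ≥ min (μ x) (μ y)) ∧
  (∀ (c : F) (x : L), μ (c • x) ≥ μ x) ∧
  (∀ x y : L, μ (H.bracket x y) ≥ min (μ x) (μ y)) ∧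
  (∀ x : L, μ (H.alpha x) ≥ μ x)

def IsFuzzyHomLieIdeal {F L : Type*} [Field F] [AddCommGroup L] [Module F L]
    (H : HomLieData F L) (μ : L → ℝ) : Prop :=
  (∀ x y : L, μ (x + y) ≥ min (μ x) (μ y)) ∧
  (∀ (c : F) (x : L), μ (c • x) ≥ μ x) ∧
  (∀ x y : L, μ (H.bracket x y) ≥ max (μ x) (μ y)) ∧
  (∀ x : L, μ (H.alpha x) ≥ μ x)

def IsHomLieSubalgebra {F L : Type*} [Field F] [AddCommGroup L] [Module F L]
    (H : HomLieData F L) (S : Submodule F L) : Prop :=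
  (∀ x ∈ S, H.alpha x ∈ S) ∧ (∀ x ∈ S, ∀ y ∈ S, H.bracket x y ∈ S)

def IsHomLieIdeal {F L : Type*} [Field F] [AddCommGroup L] [Module F L]
    (H : HomLieData F L) (S : Submodule F L) : Prop :=
  (∀ x ∈ S, H.alpha x ∈ S) ∧ (∀ x ∈ S, ∀ y : L, H.bracket x y ∈ S)

theorem stmt14 (F L₁ L₂ : Type*) [Field F] [AddCommGroup L₁] [Module F L₁]
    [AddCommGroup L₂] [Module F L₂] (H₁ : HomLieData F L₁) (H₂ : HomLieData F L₂)
    (Hp : HomLieData F (L₁ × L₂))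
    (hb : ∀ x y : L₁ × L₂, Hp.bracket x y = (H₁.bracket x.1 y.1, H₂.bracket x.2 y.2))
    (ha : ∀ x : L₁ × L₂, Hp.alpha x = (H₁.alpha x.1, H₂.alpha x.2))
    (μ₁ : L₁ → ℝ) (μ₂ : L₂ → ℝ)
    (hμ₁ : ∀ x, μ₁ x ∈ Set.Icc (0 : ℝ) 1) (hμ₂ : ∀ x, μ₂ x ∈ Set.Icc (0 : ℝ) 1)
    (h₁ : IsFuzzyHomLieSubalgebra H₁ μ₁) (h₂ : IsFuzzyHomLieSubalgebra H₂ μ₂) :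
    IsFuzzyHomLieSubalgebra Hp (fun p => min (μ₁ p.1) (μ₂ p.2)) := by
  obtain ⟨a₁, s₁, b₁, t₁⟩ := h₁
  obtain ⟨a₂, s₂, b₂, t₂⟩ := h₂
  refine ⟨fun x y => ?_, fun c x => ?_, fun x y => ?_, fun x => ?_⟩
  · have h1 := a₁ x.1 y.1; have h2 := a₂ x.2 y.2
    simp only [Prod.fst_add, Prod.snd_add]
    simp only [ge_iff_le, le_min_iff, min_le_iff] at *
    constructor
    · exact h1.elim (fun h => Or.inl (Or.inl h)) (fun h => Or.inr (Or.inl h))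
    · exact h2.elim (fun h => Or.inl (Or.inr h)) (fun h => Or.inr (Or.inr h))
  · have := s₁ c x.1; have := s₂ c x.2
    simp only [Prod.smul_fst, Prod.smul_snd]
    exact min_le_min ‹_› ‹_›
  · rw [hb]
    have h1 := b₁ x.1 y.1; have h2 := b₂ x.2 y.2
    simp only [ge_iff_le, le_min_iff, min_le_iff] at *
    constructor
    · exact h1.elim (fun h => Or.inl (Or.inl h)) (fun h => Or.inr (Or.inl h))
    · exact h2.elim (fun h => Or.inl (Or.inr h)) (fun h => Or.inr (Or.inr h))
  · rw [ha]
    exact min_le_min (t₁ x.1) (t₂ x.2)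
end

section
/- If μ₁,...,μₙ are fuzzy Hom-Lie subalgebras of Hom-Lie algebras L₁,...,Lₙ respectively, then the fuzzy set (μ₁ ⊕ ⋯ ⊕ μₙ)(x₁,...,xₙ) = min(μ₁(x₁),...,μₙ(xₙ)) is a fuzzy Hom-Lie subalgebra of the direct sum Hom-Lie algebra L₁ ⊕ ⋯ ⊕ Lₙ. -/
open scoped Classical

theorem stmt15 (F : Type*) [Field F] (n : ℕ) (hn : 0 < n) (L : Fin n → Type*)
    [∀ i, AddCommGroup (L i)] [∀ i, Module F (L i)] (H : ∀ i, HomLieData F (L i))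
    (Hd : HomLieData F (∀ i, L i))
    (hb : ∀ x y : ∀ i, L i, ∀ i, Hd.bracket x y i = (H i).bracket (x i) (y i))
    (ha : ∀ x : ∀ i, L i, ∀ i, Hd.alpha x i = (H i).alpha (x i))
    (μ : ∀ i, L i → ℝ) (hμ : ∀ i x, μ i x ∈ Set.Icc (0 : ℝ) 1)
    (h : ∀ i, IsFuzzyHomLieSubalgebra (H i) (μ i)) :
    IsFuzzyHomLieSubalgebra Hd (fun x => ⨅ i, μ i (x i)) := by
  haveI : Nonempty (Fin n) := ⟨⟨0, hn⟩⟩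
  have hbdd : ∀ x : ∀ i, L i, BddBelow (Set.range fun i => μ i (x i)) :=
    fun x => Set.Finite.bddBelow (Set.finite_range _)
  have key : ∀ x y : ∀ i, L i,
      (∀ i, μ i (x i) ⊓ μ i (y i) ≤ μ i ((x + y) i)) → False ∨ True := fun _ _ _ => Or.inr trivial
  refine ⟨fun x y => ?_, fun c x => ?_, fun x y => ?_, fun x => ?_⟩
  · refine le_ciInf fun i => ?_
    calc min (⨅ j, μ j (x j)) (⨅ j, μ j (y j))
        ≤ min (μ i (x i)) (μ i (y i)) :=
          min_le_min (ciInf_le (hbdd x) i) (ciInf_le (hbdd y) i)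
      _ ≤ μ i (x i + y i) := (h i).1 (x i) (y i)
      _ = μ i ((x + y) i) := rfl
  · refine le_ciInf fun i => ?_
    calc (⨅ j, μ j (x j)) ≤ μ i (x i) := ciInf_le (hbdd x) i
      _ ≤ μ i (c • x i) := (h i).2.1 c (x i)
      _ = μ i ((c • x) i) := rfl
  · refine le_ciInf fun i => ?_
    calc min (⨅ j, μ j (x j)) (⨅ j, μ j (y j))
        ≤ min (μ i (x i)) (μ i (y i)) :=
          min_le_min (ciInf_le (hbdd x) i) (ciInf_le (hbdd y) i)
      _ ≤ μ i ((H i).bracket (x i) (y i)) := (h i).2.2.1 (x i) (y i)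
      _ = μ i (Hd.bracket x y i) := by rw [hb]
  · refine le_ciInf fun i => ?_
    calc (⨅ j, μ j (x j)) ≤ μ i (x i) := ciInf_le (hbdd x) i
      _ ≤ μ i ((H i).alpha (x i)) := (h i).2.2.2 (x i)
      _ = μ i (Hd.alpha x i) := by rw [ha]
end

section
/- Let f : L₁ → L₂ be a surjective morphism of Hom-Lie algebras and μ a fuzzy Hom-Lie subalgebra of L₁. Then the image fuzzy set f(μ), defined by f(μ)(y) = sup{μ(x) : x ∈ f⁻¹(y)}, is a fuzzy Hom-Lie subalgebra of L₂. -/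
open scoped Classical

theorem stmt18 (F L₁ L₂ : Type*) [Field F] [AddCommGroup L₁] [Module F L₁]
    [AddCommGroup L₂] [Module F L₂] (H₁ : HomLieData F L₁) (H₂ : HomLieData F L₂)
    (f : L₁ →ₗ[F] L₂)
    (hf₁ : ∀ x y : L₁, f (H₁.bracket x y) = H₂.bracket (f x) (f y))
    (hf₂ : ∀ x : L₁, f (H₁.alpha x) = H₂.alpha (f x))
    (hf : Function.Surjective f)
    (μ : L₁ → ℝ) (hμ : ∀ x, μ x ∈ Set.Icc (0 : ℝ) 1)
    (h : IsFuzzyHomLieSubalgebra H₁ μ) :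
    IsFuzzyHomLieSubalgebra H₂ (fun y => sSup (μ '' (f ⁻¹' {y}))) := by
  obtain ⟨hadd, hsmul, hbr, hal⟩ := h
  set ν : L₂ → ℝ := fun y => sSup (μ '' (f ⁻¹' {y})) with hν
  have hne : ∀ y : L₂, (μ '' (f ⁻¹' {y})).Nonempty := by
    intro y
    obtain ⟨x, hx⟩ := hf y
    exact ⟨μ x, x, hx, rfl⟩
  have hbdd : ∀ y : L₂, BddAbove (μ '' (f ⁻¹' {y})) := by
    intro y
    exact ⟨1, by rintro r ⟨a, _, rfl⟩; exact (hμ a).2⟩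
  -- key lemma for binary min
  have key : ∀ (g : L₁ → L₁ → L₁) (G : L₂ → L₂ → L₂),
      (∀ a b, f (g a b) = G (f a) (f b)) →
      (∀ a b, μ (g a b) ≥ min (μ a) (μ b)) →
      ∀ x y : L₂, ν (G x y) ≥ min (ν x) (ν y) := by
    intro g G hc hm x y
    rw [ge_iff_le, hν]
    rw [Real.le_sSup_iff (hbdd _) (hne _)]
    intro ε hε
    have h1 : min (ν x) (ν y) + ε < ν x := by
      have := min_le_left (ν x) (ν y); linarith
    have h2 : min (ν x) (ν y) + ε < ν y := by
      have := min_le_right (ν x) (ν y); linarith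
    obtain ⟨r, ⟨a, ha, rfl⟩, hra⟩ := exists_lt_of_lt_csSup (hne x) h1
    obtain ⟨s, ⟨b, hb, rfl⟩, hsb⟩ := exists_lt_of_lt_csSup (hne y) h2
    refine ⟨μ (g a b), ⟨g a b, ?_, rfl⟩, ?_⟩
    · simp only [Set.mem_preimage, Set.mem_singleton_iff] at ha hb ⊢
      rw [hc, ha, hb]
    · exact lt_of_lt_of_le (lt_min hra hsb) (hm a b)
  have key1 : ∀ (g : L₁ → L₁) (G : L₂ → L₂),
      (∀ a, f (g a) = G (f a)) →
      (∀ a, μ (g a) ≥ μ a) →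
      ∀ x : L₂, ν (G x) ≥ ν x := by
    intro g G hc hm x
    apply csSup_le (hne x)
    rintro r ⟨a, ha, rfl⟩
    refine le_trans (hm a) (le_csSup (hbdd _) ⟨g a, ?_, rfl⟩)
    simp only [Set.mem_preimage, Set.mem_singleton_iff] at ha ⊢
    rw [hc, ha]
  refine ⟨key (· + ·) (· + ·) (by simp) hadd, ?_, key (H₁.bracket · ·) (H₂.bracket · ·) hf₁ hbr,
    key1 H₁.alpha H₂.alpha hf₂ hal⟩
  intro c x
  exact key1 (c • ·) (c • ·) (by simp) (hsmul c) x
end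

section
/- Let f : L₁ → L₂ be a surjective morphism of Hom-Lie algebras and μ a fuzzy Hom-Lie ideal of L₁. Then the image fuzzy set f(μ), defined by f(μ)(y) = sup{μ(x) : x ∈ f⁻¹(y)}, is a fuzzy Hom-Lie ideal of L₂. -/
open scoped Classical

theorem stmt19 (F L₁ L₂ : Type*) [Field F] [AddCommGroup L₁] [Module F L₁]
    [AddCommGroup L₂] [Module F L₂] (H₁ : HomLieData F L₁) (H₂ : HomLieData F L₂)
    (f : L₁ →ₗ[F] L₂)
    (hf₁ : ∀ x y : L₁, f (H₁.bracket x y) = H₂.bracket (f x) (f y))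
    (hf₂ : ∀ x : L₁, f (H₁.alpha x) = H₂.alpha (f x))
    (hf : Function.Surjective f)
    (μ : L₁ → ℝ) (hμ : ∀ x, μ x ∈ Set.Icc (0 : ℝ) 1)
    (h : IsFuzzyHomLieIdeal H₁ μ) :
    IsFuzzyHomLieIdeal H₂ (fun y => sSup (μ '' (f ⁻¹' {y}))) := by
  obtain ⟨h1, h2, h3, h4⟩ := h
  have hne : ∀ y : L₂, (μ '' (f ⁻¹' {y})).Nonempty := by
    intro y
    obtain ⟨x, hx⟩ := hf y
    exact ⟨μ x, x, by simp [hx], rfl⟩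
  have hbdd : ∀ y : L₂, BddAbove (μ '' (f ⁻¹' {y})) := by
    intro y
    exact ⟨1, by rintro _ ⟨x, -, rfl⟩; exact (hμ x).2⟩
  refine ⟨?_, ?_, ?_, ?_⟩
  · intro x y
    refine le_of_forall_lt fun t ht => ?_
    have htx : t < sSup (μ '' (f ⁻¹' {x})) := lt_of_lt_of_le ht (min_le_left _ _)
    have hty : t < sSup (μ '' (f ⁻¹' {y})) := lt_of_lt_of_le ht (min_le_right _ _)
    obtain ⟨_, ⟨a, ha, rfl⟩, hta⟩ := (lt_csSup_iff (hbdd x) (hne x)).1 htx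
    obtain ⟨_, ⟨b, hb, rfl⟩, htb⟩ := (lt_csSup_iff (hbdd y) (hne y)).1 hty
    have hmem : μ (a + b) ∈ μ '' (f ⁻¹' {x + y}) := by
      refine ⟨a + b, ?_, rfl⟩
      simp only [Set.mem_preimage, Set.mem_singleton_iff, map_add] at *
      rw [ha, hb]
    calc t < min (μ a) (μ b) := lt_min hta htb
      _ ≤ μ (a + b) := h1 a b
      _ ≤ _ := le_csSup (hbdd _) hmem
  · intro c x
    refine csSup_le (hne x) ?_
    rintro _ ⟨a, ha, rfl⟩
    refine le_trans (h2 c a) (le_csSup (hbdd _) ⟨c • a, ?_, rfl⟩)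
    simp only [Set.mem_preimage, Set.mem_singleton_iff, map_smul] at *
    rw [ha]
  · intro x y
    refine max_le ?_ ?_
    · refine csSup_le (hne x) ?_
      rintro _ ⟨a, ha, rfl⟩
      obtain ⟨b, hb⟩ := hf y
      refine le_trans (le_trans (le_max_left _ (μ b)) (h3 a b))
        (le_csSup (hbdd _) ⟨H₁.bracket a b, ?_, rfl⟩)
      simp only [Set.mem_preimage, Set.mem_singleton_iff] at *
      rw [hf₁, ha, hb]
    · refine csSup_le (hne y) ?_
      rintro _ ⟨b, hb, rfl⟩
      obtain ⟨a, ha⟩ := hf x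
      refine le_trans (le_trans (le_max_right (μ a) _) (h3 a b))
        (le_csSup (hbdd _) ⟨H₁.bracket a b, ?_, rfl⟩)
      simp only [Set.mem_preimage, Set.mem_singleton_iff] at *
      rw [hf₁, ha, hb]
  · intro x
    refine csSup_le (hne x) ?_
    rintro _ ⟨a, ha, rfl⟩
    refine le_trans (h4 a) (le_csSup (hbdd _) ⟨H₁.alpha a, ?_, rfl⟩)
    simp only [Set.mem_preimage, Set.mem_singleton_iff] at *
    rw [hf₂, ha]
end
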